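/- For all x ∈ (-1,1) and α, β ≥ 0 with Δ := [α(x+1)+β(x-1)]² - 4(1+α+β)(1-x²) ≥ 0, one has min((1+ξ₋)², (1+ξ₊)²) ≤ 2(α+1)/((1-x)(α+β+1)) ≤ max((1+ξ₋)², (1+ξ₊)²), with equality if and only if Δ = 0, where ξ± = (β(x-1)+α(1+x) ± √Δ)/(-2(α+β+1)(x-1)). -/
import Mathlib


/- STATEMENT 13: For x ∈ (-1,1), α,β ≥ 0 with Δ := [α(x+1)+β(x-1)]² - 4(1+α+β)(1-x²) ≥ 0:
min((1+ξ₋)², (1+ξ₊)²) ≤ 2(α+1)/((1-x)(α+β+1)) ≤ max((1+ξ₋)², (1+ξ₊)²),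
with equality iff Δ = 0, where ξ± = (β(x-1)+α(1+x) ± √Δ)/(-2(α+β+1)(x-1)). -/

/-- The discriminant Δ. -/
def ΔJ (α β x : ℝ) : ℝ := (α * (x + 1) + β * (x - 1)) ^ 2 - 4 * (1 + α + β) * (1 - x ^ 2)

noncomputable def ξPlus (α β x : ℝ) : ℝ :=
  (β * (x - 1) + α * (1 + x) + Real.sqrt (ΔJ α β x)) / (-2 * (α + β + 1) * (x - 1))

noncomputable def ξMinus (α β x : ℝ) : ℝ :=
  (β * (x - 1) + α * (1 + x) - Real.sqrt (ΔJ α β x)) / (-2 * (α + β + 1) * (x - 1))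

theorem xi_squeeze (x α β : ℝ) (hx : x ∈ Set.Ioo (-1 : ℝ) 1)
    (hα : 0 ≤ α) (hβ : 0 ≤ β) (hΔ : 0 ≤ ΔJ α β x) :
    min ((1 + ξMinus α β x) ^ 2) ((1 + ξPlus α β x) ^ 2)
        ≤ 2 * (α + 1) / ((1 - x) * (α + β + 1)) ∧
    2 * (α + 1) / ((1 - x) * (α + β + 1))
        ≤ max ((1 + ξMinus α β x) ^ 2) ((1 + ξPlus α β x) ^ 2) ∧
    ((min ((1 + ξMinus α β x) ^ 2) ((1 + ξPlus α β x) ^ 2)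
        = 2 * (α + 1) / ((1 - x) * (α + β + 1)) ∧
      2 * (α + 1) / ((1 - x) * (α + β + 1))
        = max ((1 + ξMinus α β x) ^ 2) ((1 + ξPlus α β x) ^ 2)) ↔ ΔJ α β x = 0) := by
  obtain ⟨hx1, hx2⟩ := hx
  set s := Real.sqrt (ΔJ α β x) with hs
  have hs2 : s ^ 2 = (α * (x + 1) + β * (x - 1)) ^ 2 - 4 * (1 + α + β) * (1 - x ^ 2) := by
    rw [hs, Real.sq_sqrt hΔ, ΔJ]
  have hsnn : 0 ≤ s := Real.sqrt_nonneg _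
  clear_value s
  have h1x : 0 < 1 - x := by linarith
  have habp : 0 < α + β + 1 := by linarith
  have hden : (1 - x) * (α + β + 1) ≠ 0 := by positivity
  have hD : (-2 * (α + β + 1) * (x - 1)) ≠ 0 := by nlinarith
  set u := 1 + ξMinus α β x with hu
  set v := 1 + ξPlus α β x with hv
  set T := 2 * (α + 1) / ((1 - x) * (α + β + 1)) with hT
  have hTpos : 0 < T := by rw [hT]; positivity
  have hu' : u = ((-2 * (α + β + 1) * (x - 1)) + (β * (x - 1) + α * (1 + x)) - s) /
      (-2 * (α + β + 1) * (x - 1)) := by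
    rw [hu, ξMinus, ← hs, eq_div_iff hD, add_mul, one_mul, div_mul_cancel₀ _ hD]; ring
  have hv' : v = ((-2 * (α + β + 1) * (x - 1)) + (β * (x - 1) + α * (1 + x)) + s) /
      (-2 * (α + β + 1) * (x - 1)) := by
    rw [hv, ξPlus, ← hs, eq_div_iff hD, add_mul, one_mul, div_mul_cancel₀ _ hD]; ring
  have hprod : u * v = T := by
    rw [hu', hv', hT, div_mul_div_comm, div_eq_div_iff (mul_ne_zero hD hD) hden]
    linear_combination (-((1 - x) * (α + β + 1))) * hs2
  have hus : u * (-2 * (α + β + 1) * (x - 1)) - v * (-2 * (α + β + 1) * (x - 1)) = -2 * s := by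
    rw [hu', hv', div_mul_cancel₀ _ hD, div_mul_cancel₀ _ hD]; ring
  clear_value u v T
  clear hu hv hu' hv'
  have hmin : min (u ^ 2) (v ^ 2) ≤ T := by
    rcases le_total (u ^ 2) (v ^ 2) with h | h
    · rw [min_eq_left h]; nlinarith
    · rw [min_eq_right h]; nlinarith
  have hmax : T ≤ max (u ^ 2) (v ^ 2) := by
    rcases le_total (u ^ 2) (v ^ 2) with h | h
    · rw [max_eq_right h]; nlinarith
    · rw [max_eq_left h]; nlinarith
  refine ⟨hmin, hmax, ?_, ?_⟩
  · rintro ⟨h1, h2⟩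
    have heq : u ^ 2 = v ^ 2 := by
      rcases le_total (u ^ 2) (v ^ 2) with h | h
      · have e1 := min_eq_left h ▸ h1
        have e2 := max_eq_right h ▸ h2
        linarith
      · have e1 := min_eq_right h ▸ h1
        have e2 := max_eq_left h ▸ h2
        linarith
    have huv : u = v := by
      rcases sq_eq_sq_iff_eq_or_eq_neg.mp heq with h | h
      · exact h
      · exfalso; nlinarith
    have hsz : s = 0 := by
      rw [huv] at hus
      nlinarith
    have : ΔJ α β x = s ^ 2 := by rw [hs, Real.sq_sqrt hΔ]
    rw [this, hsz]; ring
  · intro h0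
    have hsz : s = 0 := by rw [hs, h0, Real.sqrt_zero]
    have huv : u = v := by
      have := hus
      rw [hsz] at this
      have h2 : (u - v) * (-2 * (α + β + 1) * (x - 1)) = 0 := by linarith
      rcases mul_eq_zero.mp h2 with h | h
      · linarith
      · exact absurd h hD
    rw [huv] at hprod
    rw [huv, min_self, max_self, sq]
    exact ⟨hprod, hprod.symm⟩
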